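/- arXiv:1106.6167 — 11 statements merged into one kernel-verified Lean document; each statement's English description precedes it below -/
import Mathlib

section
/- Let a1,a2,a3,b1,b2,b3 be real numbers with 0 < ai < 1 and 0 < bi < 1 for all i, and a1+b3 ≤ 1, a2+b1 ≤ 1, a3+b2 ≤ 1 (indices mod 3). Define s_i = -a_{i+1}/a_i - b_{i+2}/b_i + a_{i+1} + b_{i+2} + 1 for i = 1,2,3 (indices mod 3). Then min(s1,s2,s3) ≤ 0, with equality if and only if a1 = a2 = a3, b1 = b2 = b3, and a_i + b_{i+2} = 1 for all i. -/
/-!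
Summing, `s₁ + s₂ + s₃ = 3 - ∑ aᵢ₊₁/aᵢ - ∑ bᵢ₊₂/bᵢ + ∑ (aᵢ + bᵢ₊₂)`. Each cyclic sum of ratios is
at least `3` by AM-GM (the ratios have product `1`), and `∑ (aᵢ + bᵢ₊₂) ≤ 3`, so the sum of the
`sᵢ` is nonpositive and so is their minimum. The minimum vanishes only if every `sᵢ` does, which
forces equality in all three estimates.
-/

open Finset Real

namespace Equiv.Perm

variable {ι : Type*} [Fintype ι] (σ : Equiv.Perm ι) {x : ι → ℝ}

theorem sum_log_comp_div_eq_zero (hx : ∀ i, 0 < x i) :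
    ∑ i, log (x (σ i) / x i) = 0 := by
  simp only [log_div (hx _).ne' (hx _).ne', sum_sub_distrib, Equiv.sum_comp σ (fun i => log (x i)),
    sub_self]

-- AM-GM for ratios of product `1`, via `∑ log rᵢ = 0` and `log r ≤ r - 1`.
theorem card_le_sum_comp_div (hx : ∀ i, 0 < x i) :
    (Fintype.card ι : ℝ) ≤ ∑ i, x (σ i) / x i := by
  have hlog : ∑ i, log (x (σ i) / x i) ≤ ∑ i, (x (σ i) / x i - 1) :=
    sum_le_sum fun i _ => log_le_sub_one_of_pos (div_pos (hx _) (hx _))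
  simp only [σ.sum_log_comp_div_eq_zero hx, sum_sub_distrib, sum_const, card_univ,
    nsmul_eq_mul, mul_one] at hlog
  linarith

theorem comp_eq_of_sum_comp_div_eq_card (hx : ∀ i, 0 < x i)
    (h : ∑ i, x (σ i) / x i = Fintype.card ι) (i : ι) : x (σ i) = x i := by
  have hr i : 0 < x (σ i) / x i := div_pos (hx _) (hx _)
  have hgap : ∑ i, (x (σ i) / x i - 1 - log (x (σ i) / x i)) = 0 := by
    simp only [sum_sub_distrib, σ.sum_log_comp_div_eq_zero hx, h, sum_const, card_univ,
      nsmul_eq_mul, mul_one, sub_self]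
  rw [sum_eq_zero_iff_of_nonneg fun i _ => by linarith [log_le_sub_one_of_pos (hr i)]] at hgap
  by_contra hne
  have hlt := log_lt_sub_one_of_pos (hr i) fun h1 => hne ((div_eq_one_iff_eq (hx i).ne').1 h1)
  linarith [hgap i (mem_univ i)]

end Equiv.Perm

theorem min_min_nonpos_of_add_add_nonpos {x y z : ℝ} (h : x + y + z ≤ 0) :
    min x (min y z) ≤ 0 := by
  simp only [min_le_iff]
  by_contra! hpos
  linarith

theorem eq_zero_of_min_min_eq_zero {x y z : ℝ} (h : x + y + z ≤ 0) (hmin : min x (min y z) = 0) :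
    x = 0 ∧ y = 0 ∧ z = 0 := by
  have hnonneg := hmin.ge
  simp only [le_min_iff] at hnonneg
  refine ⟨?_, ?_, ?_⟩ <;> linarith

theorem add_add_eq_of_cyclic_formula (a b s : ZMod 3 → ℝ)
    (hs : ∀ i, s i = -(a (i + 1) / a i) - b (i + 2) / b i + a (i + 1) + b (i + 2) + 1) :
    s 0 + s 1 + s 2 =
      -(∑ i, a (i + 1) / a i) - ∑ i, b (i + 2) / b i + ∑ i, (a i + b (i + 2)) + 3 := by
  have hshift : ∑ i : ZMod 3, a (i + 1) = ∑ i, a i :=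
    Equiv.sum_comp (Equiv.addRight (1 : ZMod 3)) a
  rw [show s 0 + s 1 + s 2 = ∑ i, s i from (Fin.sum_univ_three s).symm]
  simp only [hs, sum_add_distrib, sum_sub_distrib, sum_neg_distrib, hshift, sum_const, card_univ,
    ZMod.card, nsmul_eq_mul, mul_one, Nat.cast_ofNat]
  ring

theorem stmt_0 (a b : ZMod 3 → ℝ)
    (ha : ∀ i, 0 < a i ∧ a i < 1) (hb : ∀ i, 0 < b i ∧ b i < 1)
    (hab : ∀ i, a i + b (i + 2) ≤ 1)
    (s : ZMod 3 → ℝ)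
    (hs : ∀ i, s i = -(a (i + 1) / a i) - b (i + 2) / b i + a (i + 1) + b (i + 2) + 1) :
    min (s 0) (min (s 1) (s 2)) ≤ 0 ∧
      (min (s 0) (min (s 1) (s 2)) = 0 ↔
        ((∀ i, a i = a (i + 1)) ∧ (∀ i, b i = b (i + 1)) ∧ ∀ i, a i + b (i + 2) = 1)) := by
  have ha₀ i : 0 < a i := (ha i).1
  have hb₀ i : 0 < b i := (hb i).1
  have hcard : (Fintype.card (ZMod 3) : ℝ) = 3 := by simp
  have hones : ∑ _i : ZMod 3, (1 : ℝ) = 3 := by simp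
  have hA := (Equiv.addRight (1 : ZMod 3)).card_le_sum_comp_div ha₀
  have hB := (Equiv.addRight (2 : ZMod 3)).card_le_sum_comp_div hb₀
  simp only [Equiv.coe_addRight] at hA hB
  have hC : ∑ i, (a i + b (i + 2)) ≤ ∑ _i, 1 := sum_le_sum fun i _ => hab i
  have hsum := add_add_eq_of_cyclic_formula a b s hs
  have hsum_nonpos : s 0 + s 1 + s 2 ≤ 0 := by linarith
  refine ⟨min_min_nonpos_of_add_add_nonpos hsum_nonpos, fun hmin => ?_, ?_⟩
  · obtain ⟨h₀, h₁, h₂⟩ := eq_zero_of_min_min_eq_zero hsum_nonpos hmin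
    refine ⟨fun i => ?_, fun i => ?_, ?_⟩
    · exact ((Equiv.addRight (1 : ZMod 3)).comp_eq_of_sum_comp_div_eq_card ha₀
        (by simp only [Equiv.coe_addRight]; linarith) i).symm
    · have := (Equiv.addRight (2 : ZMod 3)).comp_eq_of_sum_comp_div_eq_card hb₀
        (by simp only [Equiv.coe_addRight]; linarith) (i + 1)
      simpa only [Equiv.coe_addRight, add_assoc, show (1 + 2 : ZMod 3) = 0 by decide, add_zero]
        using this
    · exact fun i => (sum_eq_sum_iff_of_le fun i _ => hab i).1 (by linarith) i (mem_univ i)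
  · rintro ⟨ha_const, hb_const, hab_one⟩
    have hzero i : s i = 0 := by
      have hb_shift : b (i + 2) = b i := by
        rw [← one_add_one_eq_two, ← add_assoc, ← hb_const, ← hb_const]
      rw [hs, ← ha_const, hb_shift, div_self (ha₀ i).ne', div_self (hb₀ i).ne']
      linarith [hab_one i]
    simp [hzero]
end

section
/- Let a1,a2,a3,b1,b2,b3 be real numbers with 0 < ai < 1 and 0 < bi < 1 for all i (indices mod 3). Define t_i = -a_{i+2}/b_i - a_{i+2}/a_i - a_{i+1}/a_i + a_{i+1} + 1 for i = 1,2,3. Then min(t1,t2,t3) < 0. -/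
lemma div_pair (x y : ℝ) (hx : 0 < x) (hy : 0 < y) : 2 ≤ x / y + y / x := by
  rw [div_add_div _ _ (ne_of_gt hy) (ne_of_gt hx), le_div_iff₀ (by positivity)]
  nlinarith [sq_nonneg (x - y)]

lemma div_gt (x y : ℝ) (hx : 0 < x) (hy0 : 0 < y) (hy1 : y < 1) : x < x / y := by
  rw [lt_div_iff₀ hy0]; nlinarith

theorem stmt_1 (a b : ZMod 3 → ℝ)
    (ha : ∀ i, 0 < a i ∧ a i < 1) (hb : ∀ i, 0 < b i ∧ b i < 1)
    (t : ZMod 3 → ℝ)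
    (ht : ∀ i, t i = -(a (i + 2) / b i) - a (i + 2) / a i - a (i + 1) / a i + a (i + 1) + 1) :
    min (t 0) (min (t 1) (t 2)) < 0 := by
  have h0 := ht 0
  have h1 := ht 1
  have h2 := ht 2
  have e1 : ((1 : ZMod 3) + 2) = 0 := by decide
  have e2 : ((2 : ZMod 3) + 2) = 1 := by decide
  have e3 : ((2 : ZMod 3) + 1) = 0 := by decide
  have e4 : ((0 : ZMod 3) + 2) = 2 := by decide
  have e5 : ((0 : ZMod 3) + 1) = 1 := by decide
  have e6 : ((1 : ZMod 3) + 1) = 2 := by decide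
  rw [e4, e5] at h0
  rw [e1, e6] at h1
  rw [e2, e3] at h2
  have ha0 := ha 0; have ha1 := ha 1; have ha2 := ha 2
  have hb0 := hb 0; have hb1 := hb 1; have hb2 := hb 2
  have p01 := div_pair (a 0) (a 1) ha0.1 ha1.1
  have p12 := div_pair (a 1) (a 2) ha1.1 ha2.1
  have p02 := div_pair (a 0) (a 2) ha0.1 ha2.1
  have q0 := div_gt (a 2) (b 0) ha2.1 hb0.1 hb0.2
  have q1 := div_gt (a 0) (b 1) ha0.1 hb1.1 hb1.2
  have q2 := div_gt (a 1) (b 2) ha1.1 hb2.1 hb2.2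
  have hsum : t 0 + t 1 + t 2 < 0 := by
    rw [h0, h1, h2]; linarith
  have m0 : min (t 0) (min (t 1) (t 2)) ≤ t 0 := min_le_left _ _
  have m1 : min (t 0) (min (t 1) (t 2)) ≤ t 1 :=
    le_trans (min_le_right _ _) (min_le_left _ _)
  have m2 : min (t 0) (min (t 1) (t 2)) ≤ t 2 :=
    le_trans (min_le_right _ _) (min_le_right _ _)
  linarith
end

section
/- Let a1,a2,a3,b1,b2,b3 be real numbers with 0 < ai < 1 and 0 < bi < 1 (indices mod 3). Define s_i = -a_{i+1}/a_i - b_{i+2}/b_i + a_{i+1} + b_{i+2} + 1 and v_i = -a_{i+2}/b_i - b_{i+1}/b_i - a_{i+2}/a_i - b_{i+1}/a_i + 1. Then for each i = 1,2,3, min(v_i, s_{i+1}, s_{i+2}) < 0. -/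
theorem stmt_3 (a b : ZMod 3 → ℝ)
    (ha : ∀ i, 0 < a i ∧ a i < 1) (hb : ∀ i, 0 < b i ∧ b i < 1)
    (s v : ZMod 3 → ℝ)
    (hs : ∀ i, s i = -(a (i + 1) / a i) - b (i + 2) / b i + a (i + 1) + b (i + 2) + 1)
    (hv : ∀ i, v i = -(a (i + 2) / b i) - b (i + 1) / b i - a (i + 2) / a i - b (i + 1) / a i + 1) :
    ∀ i, min (v i) (min (s (i + 1)) (s (i + 2))) < 0 := by
  intro i
  have e1 : i + 2 + 1 = i := by
    have h : (2 + 1 : ZMod 3) = 0 := rfl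
    rw [add_assoc, h, add_zero]
  have e2 : i + 2 + 2 = i + 1 := by
    have h : (2 + 2 : ZMod 3) = 1 := rfl
    rw [add_assoc, h]
  obtain ⟨hA, hA1⟩ := ha i
  obtain ⟨hB, hB1⟩ := hb i
  obtain ⟨hC, hC1⟩ := ha (i + 2)
  obtain ⟨hD, hD1⟩ := hb (i + 1)
  obtain ⟨hE, hE1⟩ := hb (i + 2)
  by_cases hvi : v i < 0
  · exact lt_of_le_of_lt (min_le_left _ _) hvi
  · push_neg at hvi
    have h0 := hvi
    rw [hv i] at h0
    set A := a i with hAdef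
    set B := b i with hBdef
    set C := a (i + 2) with hCdef
    set D := b (i + 1) with hDdef
    set E := b (i + 2) with hEdef
    have hAB : 0 < A * B := mul_pos hA hB
    have heq : -(C / B) - D / B - C / A - D / A + 1
        = 1 - (C + D) * (A + B) / (A * B) := by
      field_simp
      ring
    rw [heq] at h0
    have h0' : (C + D) * (A + B) / (A * B) ≤ 1 := by linarith
    have hkey : (C + D) * (A + B) ≤ A * B := (div_le_one hAB).mp h0'
    have hCAB : C * (A + B) < A * B := by nlinarith [mul_pos hD (add_pos hA hB)]
    have h1 : C * (A + 1) < A := by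
      nlinarith [mul_pos hC (mul_pos hA (sub_pos.mpr hB1))]
    have h2 : A + 1 < A / C := (lt_div_iff₀ hC).mpr (by nlinarith)
    have h3 : D < D / E := (lt_div_iff₀ hE).mpr (by nlinarith)
    have hs2 : s (i + 2) < 0 := by
      rw [hs (i + 2), e1, e2, ← hAdef, ← hCdef, ← hDdef, ← hEdef]
      linarith
    exact lt_of_le_of_lt (le_trans (min_le_right _ _) (min_le_right _ _)) hs2
end

section
/- Let a1,a2,a3,b1,b2,b3 be real numbers with 0 < ai < 1 and 0 < bi < 1 (indices mod 3). Define s_i = -a_{i+1}/a_i - b_{i+2}/b_i + a_{i+1} + b_{i+2} + 1 and t_i = -a_{i+2}/b_i - a_{i+2}/a_i - a_{i+1}/a_i + a_{i+1} + 1. Then for each i = 1,2,3, min(s_i, t_{i+1}) < 0. -/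
theorem stmt_4 (a b : ZMod 3 → ℝ)
    (ha : ∀ i, 0 < a i ∧ a i < 1) (hb : ∀ i, 0 < b i ∧ b i < 1)
    (s t : ZMod 3 → ℝ)
    (hs : ∀ i, s i = -(a (i + 1) / a i) - b (i + 2) / b i + a (i + 1) + b (i + 2) + 1)
    (ht : ∀ i, t i = -(a (i + 2) / b i) - a (i + 2) / a i - a (i + 1) / a i + a (i + 1) + 1) :
    ∀ i, min (s i) (t (i + 1)) < 0 := by
  intro i
  rcases lt_or_ge (s i) 0 with h | h
  · exact lt_of_le_of_lt (min_le_left _ _) h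
  · refine lt_of_le_of_lt (min_le_right _ _) ?_
    have e3 : i + 1 + 2 = i := by
      have : ((1 : ZMod 3) + 2) = 0 := rfl
      rw [add_assoc, this, add_zero]
    have e2 : i + 1 + 1 = i + 2 := by
      have : ((1 : ZMod 3) + 1) = 2 := rfl
      rw [add_assoc, this]
    rw [ht, e3, e2]
    rw [hs] at h
    obtain ⟨hx0, hx1⟩ := ha i
    obtain ⟨hy0, hy1⟩ := ha (i + 1)
    obtain ⟨hz0, hz1⟩ := ha (i + 2)
    obtain ⟨hp0, hp1⟩ := hb i
    obtain ⟨hq0, hq1⟩ := hb (i + 2)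
    obtain ⟨hr0, hr1⟩ := hb (i + 1)
    set x := a i
    set y := a (i + 1)
    set z := a (i + 2)
    set p := b i
    set q := b (i + 2)
    set r := b (i + 1)
    have hqp : q < q / p := by
      rw [lt_div_iff₀ hp0]; nlinarith
    have hA : y / x < 1 + y := by linarith
    have hA' : y < (1 + y) * x := (div_lt_iff₀ hx0).1 hA
    have hxy : 1 - x < x / y := by
      rw [lt_div_iff₀ hy0]; nlinarith
    have hxr : x < x / r := by
      rw [lt_div_iff₀ hr0]; nlinarith
    have hzy : z ≤ z / y := by
      rw [le_div_iff₀ hy0]; nlinarith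
    linarith
end

section
/- Let a1,a2,a3,b1,b2,b3 be real numbers with 0 < ai < 1 and 0 < bi < 1 (indices mod 3). Define s_i = -a_{i+1}/a_i - b_{i+2}/b_i + a_{i+1} + b_{i+2} + 1 and u_i = -b_{i+2}/b_i - b_{i+1}/b_i - b_{i+1}/a_i + b_{i+2} + 1. Then for each i = 1,2,3, min(s_i, u_{i+2}) < 0. -/
theorem stmt_5 (a b : ZMod 3 → ℝ)
    (ha : ∀ i, 0 < a i ∧ a i < 1) (hb : ∀ i, 0 < b i ∧ b i < 1)
    (s u : ZMod 3 → ℝ)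
    (hs : ∀ i, s i = -(a (i + 1) / a i) - b (i + 2) / b i + a (i + 1) + b (i + 2) + 1)
    (hu : ∀ i, u i = -(b (i + 2) / b i) - b (i + 1) / b i - b (i + 1) / a i + b (i + 2) + 1) :
    ∀ i, min (s i) (u (i + 2)) < 0 := by
  intro i
  by_contra hcon
  push_neg at hcon
  rw [le_min_iff] at hcon
  obtain ⟨h1, h2⟩ := hcon
  rw [hs i] at h1
  rw [hu (i + 2)] at h2
  have e1 : i + 2 + 2 = i + 1 := by
    have : (2 + 2 : ZMod 3) = 1 := by decide
    rw [add_assoc, this]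
  have e2 : i + 2 + 1 = i := by
    have : (2 + 1 : ZMod 3) = 0 := by decide
    rw [add_assoc, this, add_zero]
  rw [e1, e2] at h2
  obtain ⟨hA, hA1⟩ := ha i
  obtain ⟨hB, hB1⟩ := ha (i + 1)
  obtain ⟨hC, hC1⟩ := ha (i + 2)
  obtain ⟨hP, hP1⟩ := hb i
  obtain ⟨hQ, hQ1⟩ := hb (i + 1)
  obtain ⟨hR, hR1⟩ := hb (i + 2)
  set A := a i
  set B := a (i + 1)
  set C := a (i + 2)
  set P := b i
  set Q := b (i + 1)
  set R := b (i + 2)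
  -- from h1 : 0 ≤ -(B/A) - R/P + B + R + 1
  have hBA : B < B / A := by rw [lt_div_iff₀ hA]; nlinarith
  have k1 : R / P < 1 + R := by linarith
  have k1' : R * (1 - P) < P := by
    rw [div_lt_iff₀ hP] at k1
    nlinarith
  have hQR : Q ≤ Q / R := by rw [le_div_iff₀ hR]; nlinarith
  have hPC : P < P / C := by rw [lt_div_iff₀ hC]; nlinarith
  have k2 : P / R < 1 - P := by linarith
  have k2' : P < R * (1 - P) := by
    rw [div_lt_iff₀ hR] at k2
    nlinarith
  linarith
end

section
/- Let a1,a2,a3,b1,b2,b3 be real numbers with 0 < ai < 1 and 0 < bi < 1 (indices mod 3). Define v_i = -a_{i+2}/b_i - b_{i+1}/b_i - a_{i+2}/a_i - b_{i+1}/a_i + 1 and u_i = -b_{i+2}/b_i - b_{i+1}/b_i - b_{i+1}/a_i + b_{i+2} + 1. Then for each i = 1,2,3, min(v_i, u_{i+2}) < 0. -/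
theorem stmt_6 (a b : ZMod 3 → ℝ)
    (ha : ∀ i, 0 < a i ∧ a i < 1) (hb : ∀ i, 0 < b i ∧ b i < 1)
    (v u : ZMod 3 → ℝ)
    (hv : ∀ i, v i = -(a (i + 2) / b i) - b (i + 1) / b i - a (i + 2) / a i - b (i + 1) / a i + 1)
    (hu : ∀ i, u i = -(b (i + 2) / b i) - b (i + 1) / b i - b (i + 1) / a i + b (i + 2) + 1) :
    ∀ i, min (v i) (u (i + 2)) < 0 := by
  intro i
  rw [min_lt_iff]
  rcases lt_or_ge (v i) 0 with h | h
  · exact Or.inl h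
  · right
    rw [hv i] at h
    rw [hu (i + 2)]
    have e1 : i + 2 + 2 = i + 1 := by
      have : (2 + 2 : ZMod 3) = 1 := by decide
      rw [add_assoc, this]
    have e2 : i + 2 + 1 = i := by
      have : (2 + 1 : ZMod 3) = 0 := by decide
      rw [add_assoc, this, add_zero]
    rw [e1, e2]
    obtain ⟨hA0, hA1⟩ := ha (i + 2)
    obtain ⟨hai0, hai1⟩ := ha i
    obtain ⟨hbi0, hbi1⟩ := hb i
    obtain ⟨hb10, hb11⟩ := hb (i + 1)
    obtain ⟨hb20, hb21⟩ := hb (i + 2)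
    -- from v i ≥ 0 deduce a (i+2) < b i
    have hlt : a (i + 2) / b i < 1 := by
      have t1 : 0 < a (i + 2) / a i := div_pos hA0 hai0
      have t2 : 0 < b (i + 1) / b i := div_pos hb10 hbi0
      have t3 : 0 < b (i + 1) / a i := div_pos hb10 hai0
      linarith
    have hAb : a (i + 2) < b i := (div_lt_one hbi0).mp hlt
    have k1 : 1 < b i / a (i + 2) := (one_lt_div hA0).mpr hAb
    have k2 : 0 < b i / b (i + 2) := div_pos hbi0 hb20
    have k3 : b (i + 1) < b (i + 1) / b (i + 2) := by
      rw [lt_div_iff₀ hb20]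
      nlinarith
    linarith
end

section
/- Let a1,a2,a3,b1,b2,b3 be real numbers with 0 < ai < 1 and 0 < bi < 1 (indices mod 3). Define v_i = -a_{i+2}/b_i - b_{i+1}/b_i - a_{i+2}/a_i - b_{i+1}/a_i + 1 and t_i = -a_{i+2}/b_i - a_{i+2}/a_i - a_{i+1}/a_i + a_{i+1} + 1. Then for each i = 1,2,3, min(v_i, t_{i+1}) < 0. -/
theorem stmt_7 (a b : ZMod 3 → ℝ)
    (ha : ∀ i, 0 < a i ∧ a i < 1) (hb : ∀ i, 0 < b i ∧ b i < 1)
    (v t : ZMod 3 → ℝ)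
    (hv : ∀ i, v i = -(a (i + 2) / b i) - b (i + 1) / b i - a (i + 2) / a i - b (i + 1) / a i + 1)
    (ht : ∀ i, t i = -(a (i + 2) / b i) - a (i + 2) / a i - a (i + 1) / a i + a (i + 1) + 1) :
    ∀ i, min (v i) (t (i + 1)) < 0 := by
  intro i
  by_contra h
  push_neg at h
  rw [le_min_iff] at h
  obtain ⟨hv0, ht0⟩ := h
  have e3 : i + 1 + 2 = i := by
    have : (1 + 2 : ZMod 3) = 0 := by decide
    rw [add_assoc, this, add_zero]
  have e2 : i + 1 + 1 = i + 2 := by ring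
  rw [hv i] at hv0
  rw [ht (i + 1), e3, e2] at ht0
  obtain ⟨hA, hA1⟩ := ha i
  obtain ⟨hB, hB1⟩ := ha (i + 1)
  obtain ⟨hC, hC1⟩ := ha (i + 2)
  obtain ⟨hD, hD1⟩ := hb i
  obtain ⟨hE, hE1⟩ := hb (i + 1)
  -- from v i ≥ 0 : b(i+1) < a i
  have p1 : 0 < a (i + 2) / b i := div_pos hC hD
  have p2 : 0 < b (i + 1) / b i := div_pos hE hD
  have p3 : 0 < a (i + 2) / a i := div_pos hC hA
  have h1 : b (i + 1) / a i < 1 := by linarith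
  have hEA : b (i + 1) < a i := by
    rwa [div_lt_one hA] at h1
  -- from t (i+1) ≥ 0 : a i < b(i+1)
  have p4 : a (i + 2) < a (i + 2) / a (i + 1) := by
    rw [lt_div_iff₀ hB]; nlinarith
  have p5 : 0 < a i / a (i + 1) := div_pos hA hB
  have h2 : a i / b (i + 1) < 1 := by linarith
  have hAE : a i < b (i + 1) := by
    rwa [div_lt_one hE] at h2
  linarith
end

section
/- Let a1,a2,a3,b1,b2,b3 be real numbers with 0 < ai < 1 and 0 < bi < 1 (indices mod 3). Define u_i = -b_{i+2}/b_i - b_{i+1}/b_i - b_{i+1}/a_i + b_{i+2} + 1 and t_i = -a_{i+2}/b_i - a_{i+2}/a_i - a_{i+1}/a_i + a_{i+1} + 1. Then for each i = 1,2,3, min(u_i, t_{i+1}) < 0. -/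
lemma aux1 : ∀ j : ZMod 3, j + 1 + 2 = j := by decide
lemma aux2 : ∀ j : ZMod 3, j + 1 + 1 = j + 2 := by decide

theorem stmt_8 (a b : ZMod 3 → ℝ)
    (ha : ∀ i, 0 < a i ∧ a i < 1) (hb : ∀ i, 0 < b i ∧ b i < 1)
    (u t : ZMod 3 → ℝ)
    (hu : ∀ i, u i = -(b (i + 2) / b i) - b (i + 1) / b i - b (i + 1) / a i + b (i + 2) + 1)
    (ht : ∀ i, t i = -(a (i + 2) / b i) - a (i + 2) / a i - a (i + 1) / a i + a (i + 1) + 1) :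
    ∀ i, min (u i) (t (i + 1)) < 0 := by
  intro i
  by_contra h
  push_neg at h
  have h1 : (0:ℝ) ≤ u i := le_trans h (min_le_left _ _)
  have h2 : (0:ℝ) ≤ t (i + 1) := le_trans h (min_le_right _ _)
  have e1 : i + 1 + 2 = i := aux1 i
  have e2 : i + 1 + 1 = i + 2 := aux2 i
  rw [hu i] at h1
  rw [ht (i + 1), e1, e2] at h2
  obtain ⟨hx, hx1⟩ := ha i
  obtain ⟨hy, hy1⟩ := ha (i + 1)
  obtain ⟨hz, hz1⟩ := ha (i + 2)
  obtain ⟨hp, hp1⟩ := hb i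
  obtain ⟨hq, hq1⟩ := hb (i + 1)
  obtain ⟨hr, hr1⟩ := hb (i + 2)
  -- from h1 : q/x ≤ 1 - q
  have d1 : b (i + 2) ≤ b (i + 2) / b i := (le_div_iff₀ hp).mpr (by nlinarith)
  have d2 : b (i + 1) ≤ b (i + 1) / b i := (le_div_iff₀ hp).mpr (by nlinarith)
  have hq' : b (i + 1) / a i ≤ 1 - b (i + 1) := by linarith
  have k1 : b (i + 1) ≤ a i * (1 - b (i + 1)) := by
    have := (div_le_iff₀ hx).mp hq'
    linarith [this]
  -- from h2 : x/q ≤ 1 - x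
  have d3 : a (i + 2) ≤ a (i + 2) / a (i + 1) := (le_div_iff₀ hy).mpr (by nlinarith)
  have d4 : a i ≤ a i / a (i + 1) := (le_div_iff₀ hy).mpr (by nlinarith)
  have hx' : a i / b (i + 1) ≤ 1 - a i := by linarith
  have k2 : a i ≤ b (i + 1) * (1 - a i) := by
    have := (div_le_iff₀ hq).mp hx'
    linarith [this]
  nlinarith [mul_pos hx hq]
end

section
/- In the normed space (ℝ², ‖·‖₁), for every unit vector y there exists a unit vector x with ‖x - y‖₁ + ‖x + y‖₁ ≥ 3, and the unit vectors y = ±(1/2, 1/2) and y = ±(1/2, -1/2) satisfy max over unit x of ‖x - y‖₁ + ‖x + y‖₁ = 3; hence min over unit y of max over unit x of (‖x - y‖₁ + ‖x + y‖₁) = 3. -/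
private lemma aux_norm (x : PiLp 1 (fun _ : Fin 2 => ℝ)) : ‖x‖ = |x 0| + |x 1| := by
  rw [PiLp.norm_eq_sum (by norm_num)]
  simp [Fin.sum_univ_two, Real.norm_eq_abs]

private lemma aux_sum_abs (a c : ℝ) : |a - c| + |a + c| = 2 * max |a| |c| := by
  rcases le_total |a| |c| with h | h
  · rw [max_eq_right h]
    rcases abs_cases a with ⟨h1,_⟩|⟨h1,_⟩ <;> rcases abs_cases c with ⟨h2,_⟩|⟨h2,_⟩ <;>
      rcases abs_cases (a-c) with ⟨h3,_⟩|⟨h3,h3'⟩ <;> rcases abs_cases (a+c) with ⟨h4,_⟩|⟨h4,h4'⟩ <;>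
      linarith
  · rw [max_eq_left h]
    rcases abs_cases a with ⟨h1,_⟩|⟨h1,_⟩ <;> rcases abs_cases c with ⟨h2,_⟩|⟨h2,_⟩ <;>
      rcases abs_cases (a-c) with ⟨h3,_⟩|⟨h3,h3'⟩ <;> rcases abs_cases (a+c) with ⟨h4,_⟩|⟨h4,h4'⟩ <;>
      linarith

private lemma aux_val (x y : PiLp 1 (fun _ : Fin 2 => ℝ)) :
    ‖x - y‖ + ‖x + y‖ = 2 * max |x 0| |y 0| + 2 * max |x 1| |y 1| := by
  rw [aux_norm, aux_norm]
  show |x 0 - y 0| + |x 1 - y 1| + (|x 0 + y 0| + |x 1 + y 1|) = _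
  rw [← aux_sum_abs, ← aux_sum_abs]; ring

private lemma aux_first (y : PiLp 1 (fun _ : Fin 2 => ℝ)) (hy : ‖y‖ = 1) :
    ∃ x : PiLp 1 (fun _ : Fin 2 => ℝ), ‖x‖ = 1 ∧ 3 ≤ ‖x - y‖ + ‖x + y‖ := by
  rw [aux_norm] at hy
  have h0 := abs_nonneg (y 0)
  have h1 := abs_nonneg (y 1)
  rcases le_total (1/2 : ℝ) |y 0| with h | h
  · refine ⟨(WithLp.equiv 1 (Fin 2 → ℝ)).symm ![0, 1], ?_, ?_⟩
    · rw [aux_norm]; simp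
    · rw [aux_val]
      have e0 : ((WithLp.equiv 1 (Fin 2 → ℝ)).symm ![(0:ℝ), 1]) 0 = 0 := by simp
      have e1 : ((WithLp.equiv 1 (Fin 2 → ℝ)).symm ![(0:ℝ), 1]) 1 = 1 := by simp
      rw [e0, e1]
      have : max |(0:ℝ)| |y 0| = |y 0| := by simp [max_eq_right h0]
      rw [this]
      have : max |(1:ℝ)| |y 1| = 1 := by rw [abs_one]; exact max_eq_left (by linarith)
      rw [this]; linarith
  · refine ⟨(WithLp.equiv 1 (Fin 2 → ℝ)).symm ![1, 0], ?_, ?_⟩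
    · rw [aux_norm]; simp
    · rw [aux_val]
      have e0 : ((WithLp.equiv 1 (Fin 2 → ℝ)).symm ![(1:ℝ), 0]) 0 = 1 := by simp
      have e1 : ((WithLp.equiv 1 (Fin 2 → ℝ)).symm ![(1:ℝ), 0]) 1 = 0 := by simp
      rw [e0, e1]
      have hb : (1/2:ℝ) ≤ |y 1| := by linarith
      have : max |(1:ℝ)| |y 0| = 1 := by rw [abs_one]; exact max_eq_left (by linarith)
      rw [this]
      have : max |(0:ℝ)| |y 1| = |y 1| := by simp [max_eq_right h1]
      rw [this]; linarith

private lemma aux_great (y : PiLp 1 (fun _ : Fin 2 => ℝ)) (h0 : |y 0| = 1/2) (h1 : |y 1| = 1/2) :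
    IsGreatest {r : ℝ | ∃ x : PiLp 1 (fun _ : Fin 2 => ℝ),
      ‖x‖ = 1 ∧ r = ‖x - y‖ + ‖x + y‖} 3 := by
  constructor
  · refine ⟨(WithLp.equiv 1 (Fin 2 → ℝ)).symm ![1, 0], by rw [aux_norm]; simp, ?_⟩
    rw [aux_val]
    have e0 : ((WithLp.equiv 1 (Fin 2 → ℝ)).symm ![(1:ℝ), 0]) 0 = 1 := by simp
    have e1 : ((WithLp.equiv 1 (Fin 2 → ℝ)).symm ![(1:ℝ), 0]) 1 = 0 := by simp
    rw [e0, e1, h0, h1, abs_one, abs_zero]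
    rw [max_eq_left (by norm_num), max_eq_right (by norm_num)]; norm_num
  · rintro r ⟨x, hx, rfl⟩
    rw [aux_val, h0, h1]
    rw [aux_norm] at hx
    have a0 := abs_nonneg (x 0)
    have a1 := abs_nonneg (x 1)
    rcases le_total |x 0| (1/2 : ℝ) with h | h
    · rw [max_eq_right h, max_eq_left (by linarith)]; linarith
    · rw [max_eq_left h, max_eq_right (by linarith)]; linarith

theorem stmt_14 :
    (∀ y : PiLp 1 (fun _ : Fin 2 => ℝ), ‖y‖ = 1 →
      ∃ x : PiLp 1 (fun _ : Fin 2 => ℝ), ‖x‖ = 1 ∧ 3 ≤ ‖x - y‖ + ‖x + y‖) ∧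
    (∀ y : PiLp 1 (fun _ : Fin 2 => ℝ),
      (y = (WithLp.equiv 1 (Fin 2 → ℝ)).symm ![1/2, 1/2] ∨
       y = -(WithLp.equiv 1 (Fin 2 → ℝ)).symm ![1/2, 1/2] ∨
       y = (WithLp.equiv 1 (Fin 2 → ℝ)).symm ![1/2, -(1/2)] ∨
       y = -(WithLp.equiv 1 (Fin 2 → ℝ)).symm ![1/2, -(1/2)]) →
      IsGreatest {r : ℝ | ∃ x : PiLp 1 (fun _ : Fin 2 => ℝ),
        ‖x‖ = 1 ∧ r = ‖x - y‖ + ‖x + y‖} 3) ∧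
    sInf {m : ℝ | ∃ y : PiLp 1 (fun _ : Fin 2 => ℝ), ‖y‖ = 1 ∧
      m = sSup {r : ℝ | ∃ x : PiLp 1 (fun _ : Fin 2 => ℝ),
        ‖x‖ = 1 ∧ r = ‖x - y‖ + ‖x + y‖}} = 3 := by
  have hgreat : ∀ y : PiLp 1 (fun _ : Fin 2 => ℝ),
      (y = (WithLp.equiv 1 (Fin 2 → ℝ)).symm ![1/2, 1/2] ∨
       y = -(WithLp.equiv 1 (Fin 2 → ℝ)).symm ![1/2, 1/2] ∨
       y = (WithLp.equiv 1 (Fin 2 → ℝ)).symm ![1/2, -(1/2)] ∨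
       y = -(WithLp.equiv 1 (Fin 2 → ℝ)).symm ![1/2, -(1/2)]) →
      IsGreatest {r : ℝ | ∃ x : PiLp 1 (fun _ : Fin 2 => ℝ),
        ‖x‖ = 1 ∧ r = ‖x - y‖ + ‖x + y‖} 3 := by
    rintro y (rfl | rfl | rfl | rfl) <;>
      refine aux_great _ ?_ ?_ <;> simp
  refine ⟨aux_first, hgreat, ?_⟩
  set y₀ : PiLp 1 (fun _ : Fin 2 => ℝ) := (WithLp.equiv 1 (Fin 2 → ℝ)).symm ![1/2, 1/2] with hy₀
  have hg := hgreat y₀ (Or.inl rfl)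
  have hy₀norm : ‖y₀‖ = 1 := by rw [aux_norm]; norm_num [hy₀, abs_of_nonneg]
  apply le_antisymm
  · apply csInf_le
    · refine ⟨3, ?_⟩
      rintro m ⟨y, hy, rfl⟩
      obtain ⟨x, hx, hx3⟩ := aux_first y hy
      have hbdd : BddAbove {r : ℝ | ∃ x : PiLp 1 (fun _ : Fin 2 => ℝ),
          ‖x‖ = 1 ∧ r = ‖x - y‖ + ‖x + y‖} := by
        refine ⟨4, ?_⟩
        rintro r ⟨x', hx', rfl⟩
        calc ‖x' - y‖ + ‖x' + y‖ ≤ (‖x'‖ + ‖y‖) + (‖x'‖ + ‖y‖) :=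
              add_le_add (norm_sub_le _ _) (norm_add_le _ _)
          _ = 4 := by rw [hx', hy]; norm_num
      calc (3:ℝ) ≤ ‖x - y‖ + ‖x + y‖ := hx3
        _ ≤ sSup _ := le_csSup hbdd ⟨x, hx, rfl⟩
    · exact ⟨y₀, hy₀norm, hg.csSup_eq.symm⟩
  · apply le_csInf
    · exact ⟨_, y₀, hy₀norm, hg.csSup_eq.symm⟩
    · rintro m ⟨y, hy, rfl⟩
      obtain ⟨x, hx, hx3⟩ := aux_first y hy
      have hbdd : BddAbove {r : ℝ | ∃ x : PiLp 1 (fun _ : Fin 2 => ℝ),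
          ‖x‖ = 1 ∧ r = ‖x - y‖ + ‖x + y‖} := by
        refine ⟨4, ?_⟩
        rintro r ⟨x', hx', rfl⟩
        calc ‖x' - y‖ + ‖x' + y‖ ≤ (‖x'‖ + ‖y‖) + (‖x'‖ + ‖y‖) :=
              add_le_add (norm_sub_le _ _) (norm_add_le _ _)
          _ = 4 := by rw [hx', hy]; norm_num
      calc (3:ℝ) ≤ ‖x - y‖ + ‖x + y‖ := hx3
        _ ≤ sSup _ := le_csSup hbdd ⟨x, hx, rfl⟩
end

section
/- In (ℝⁿ, ‖·‖₁) with n ≥ 1, min over y with ‖y‖₁ = 1 of max over x with ‖x‖₁ = 1 of (‖x - y‖₁ + ‖x + y‖₁) equals 4 - 2/n. -/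
/-!
Coordinatewise, `|a - b| + |a + b| = 2 max(|a|, |b|) = 2(|a| + |b|) - 2 min(|a|, |b|)`, so on the
unit sphere of `ℓ¹ⁿ` we get `‖x - y‖ + ‖x + y‖ = 4 - 2 ∑ᵢ min(|xᵢ|, |yᵢ|)`. Every unit `y` has a
coordinate with `|yᵢ| ≤ 1/n`, and `x = eᵢ` makes the sum of minima at most `1/n`. Conversely, for
the barycentre `y = (1/n, …, 1/n)` every unit `x` has a coordinate with `|xᵢ| ≥ 1/n`, which makes
the sum of minima at least `1/n`.
-/

open Finset

lemma abs_sub_add_abs_add (a b : ℝ) :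
    |a - b| + |a + b| = 2 * (|a| + |b|) - 2 * min |a| |b| := by
  rcases abs_cases a with ⟨ha, _⟩ | ⟨ha, _⟩ <;> rcases abs_cases b with ⟨hb, _⟩ | ⟨hb, _⟩ <;>
    rcases min_cases |a| |b| with ⟨hm, _⟩ | ⟨hm, _⟩ <;>
    rcases abs_cases (a - b) with ⟨h₁, _⟩ | ⟨h₁, _⟩ <;>
    rcases abs_cases (a + b) with ⟨h₂, _⟩ | ⟨h₂, _⟩ <;>
    linarith

section L1

variable {ι : Type*} [Fintype ι]

lemma PiLp.norm_sub_add_norm_add_of_L1 (x y : PiLp 1 (fun _ : ι => ℝ)) :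
    ‖x - y‖ + ‖x + y‖ = 2 * (‖x‖ + ‖y‖) - 2 * ∑ i, min |x i| |y i| := by
  simp only [PiLp.norm_eq_of_L1, PiLp.sub_apply, PiLp.add_apply, Real.norm_eq_abs,
    ← sum_add_distrib, abs_sub_add_abs_add, mul_sum, ← sum_sub_distrib]

lemma exists_norm_eq_one_le_norm_sub_add_norm_add [Nonempty ι] (y : PiLp 1 (fun _ : ι => ℝ))
    (hy : ‖y‖ = 1) :
    ∃ x : PiLp 1 (fun _ : ι => ℝ), ‖x‖ = 1 ∧ 4 - 2 / Fintype.card ι ≤ ‖x - y‖ + ‖x + y‖ := by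
  classical
  have hcard : (0 : ℝ) < Fintype.card ι := by exact_mod_cast Fintype.card_pos
  obtain ⟨i, -, hi⟩ : ∃ i ∈ univ, |y i| ≤ (Fintype.card ι : ℝ)⁻¹ := by
    refine exists_le_of_sum_le univ_nonempty ?_
    simp [← Real.norm_eq_abs, ← PiLp.norm_eq_of_L1, hy, hcard.ne']
  refine ⟨PiLp.single 1 i 1, by simp [PiLp.norm_single], ?_⟩
  have hmin : ∑ j, min |PiLp.single 1 i (1 : ℝ) j| |y j| ≤ |y i| := by
    rw [sum_eq_single i (fun j _ hj => by simp [hj]) (by simp)]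
    exact min_le_right _ _
  rw [PiLp.norm_sub_add_norm_add_of_L1, PiLp.norm_single, norm_one, hy, div_eq_mul_inv]
  linarith

lemma exists_norm_eq_one_forall_norm_sub_add_norm_add_le [Nonempty ι] :
    ∃ y : PiLp 1 (fun _ : ι => ℝ), ‖y‖ = 1 ∧
      ∀ x : PiLp 1 (fun _ : ι => ℝ), ‖x‖ = 1 → ‖x - y‖ + ‖x + y‖ ≤ 4 - 2 / Fintype.card ι := by
  have hcard : (0 : ℝ) < Fintype.card ι := by exact_mod_cast Fintype.card_pos
  set c : ℝ := (Fintype.card ι : ℝ)⁻¹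
  have hc : 0 ≤ c := by positivity
  set y : PiLp 1 (fun _ : ι => ℝ) := WithLp.toLp 1 fun _ => c
  have hy : ‖y‖ = 1 := by simp [y, PiLp.norm_eq_of_L1, c, hcard.ne']
  refine ⟨y, hy, fun x hx => ?_⟩
  obtain ⟨i, -, hi⟩ : ∃ i ∈ univ, c ≤ |x i| := by
    refine exists_le_of_sum_le univ_nonempty ?_
    simp [← Real.norm_eq_abs, ← PiLp.norm_eq_of_L1, hx, c, hcard.ne']
  have hmin : c ≤ ∑ j, min |x j| |y j| :=
    calc c = min |x i| |y i| := by rw [show y i = c from rfl, abs_of_nonneg hc, min_eq_right hi]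
      _ ≤ ∑ j, min |x j| |y j| :=
        single_le_sum (f := fun j => min |x j| |y j|) (fun j _ => by positivity) (mem_univ i)
  rw [PiLp.norm_sub_add_norm_add_of_L1, hx, hy, div_eq_mul_inv]
  linarith

end L1

lemma sInf_sSup_eq_of_bounds {α β : Type*} (P : α → Prop) (Q : β → Prop) (F : α → β → ℝ)
    (c : ℝ) (hbdd : ∀ y, Q y → ∃ M, ∀ x, P x → F x y ≤ M)
    (hlow : ∀ y, Q y → ∃ x, P x ∧ c ≤ F x y) (hup : ∃ y, Q y ∧ ∀ x, P x → F x y ≤ c) :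
    sInf {m : ℝ | ∃ y, Q y ∧ m = sSup {r : ℝ | ∃ x, P x ∧ r = F x y}} = c := by
  have hsup_ge : ∀ y, Q y → c ≤ sSup {r : ℝ | ∃ x, P x ∧ r = F x y} := by
    intro y hy
    obtain ⟨M, hM⟩ := hbdd y hy
    obtain ⟨x, hx, hcx⟩ := hlow y hy
    exact hcx.trans (le_csSup ⟨M, by rintro r ⟨x, hx, rfl⟩; exact hM x hx⟩ ⟨x, hx, rfl⟩)
  obtain ⟨y₀, hy₀, hup₀⟩ := hup
  obtain ⟨x₀, hx₀, -⟩ := hlow y₀ hy₀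
  refine IsLeast.csInf_eq ⟨⟨y₀, hy₀, le_antisymm (hsup_ge y₀ hy₀) ?_⟩, ?_⟩
  · exact csSup_le ⟨_, x₀, hx₀, rfl⟩ (by rintro r ⟨x, hx, rfl⟩; exact hup₀ x hx)
  · rintro m ⟨y, hy, rfl⟩
    exact hsup_ge y hy

theorem stmt_15 (n : ℕ) (hn : 1 ≤ n) :
    sInf {m : ℝ | ∃ y : PiLp 1 (fun _ : Fin n => ℝ), ‖y‖ = 1 ∧
      m = sSup {r : ℝ | ∃ x : PiLp 1 (fun _ : Fin n => ℝ),
        ‖x‖ = 1 ∧ r = ‖x - y‖ + ‖x + y‖}} = 4 - 2 / n := by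
  have : Nonempty (Fin n) := ⟨⟨0, hn⟩⟩
  refine sInf_sSup_eq_of_bounds _ _ _ _ ?_ ?_ ?_
  · exact fun y hy => ⟨4, fun x hx => by linarith [norm_sub_le x y, norm_add_le x y]⟩
  · simpa only [Fintype.card_fin] using exists_norm_eq_one_le_norm_sub_add_norm_add (ι := Fin n)
  · simpa only [Fintype.card_fin] using
      exists_norm_eq_one_forall_norm_sub_add_norm_add_le (ι := Fin n)
end

section
/- Let (E, ‖·‖) be a two-dimensional real normed space with unit sphere S, and let v1, v2, v3 = v2 - v1 be unit vectors forming an inscribed affine regular hexagon. If x is a unit vector of the form x = λ v1 + μ v2 with λ, μ ≥ 0 (i.e., x lies on the arc [v1, v2] of S), then ‖x - v1‖ + ‖x + v1‖ ≤ 3. -/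
/-! Write `x = λ v₁ + μ v₂`. A norming functional of `v₂` is nonnegative on `v₁` because
`‖v₂ - v₁‖ ≤ ‖v₂‖`, so evaluating it at `x` gives `μ ≤ ‖x‖ = 1`; symmetrically `λ ≤ 1`.
Then `x - v₁` is a nonnegative combination of two of the hexagon vertices `v₁, v₂, v₂ - v₁`
whose coefficients sum to at most `1`, so `‖x - v₁‖ ≤ 1`, while `‖x + v₁‖ ≤ 2` trivially. -/

section

variable {E : Type*} [NormedAddCommGroup E] [NormedSpace ℝ E]

lemma mul_norm_le_norm_smul_add_smul {u w : E} (h : ‖w - u‖ ≤ ‖w‖) {a b : ℝ}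
    (ha : 0 ≤ a) : b * ‖w‖ ≤ ‖a • u + b • w‖ := by
  obtain ⟨g, hg, hgw⟩ := exists_dual_vector'' ℝ w
  rw [RCLike.ofReal_real_eq_id, id] at hgw
  have hg_le : ∀ y, g y ≤ ‖y‖ := fun y =>
    (le_abs_self _).trans <| by simpa using g.le_of_opNorm_le hg y
  have hgu : 0 ≤ g u := by
    have := hg_le (w - u)
    rw [map_sub, hgw] at this
    linarith
  calc b * ‖w‖ ≤ a * g u + b * ‖w‖ := le_add_of_nonneg_left (mul_nonneg ha hgu)
    _ = g (a • u + b • w) := by simp [hgw]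
    _ ≤ ‖a • u + b • w‖ := hg_le _

lemma norm_smul_add_smul_sub_le_one {u w : E} (hu : ‖u‖ ≤ 1) (hw : ‖w‖ ≤ 1)
    (hwu : ‖w - u‖ ≤ 1) {a b : ℝ} (ha₀ : 0 ≤ a) (ha₁ : a ≤ 1) (hb₀ : 0 ≤ b) (hb₁ : b ≤ 1) :
    ‖a • u + b • w - u‖ ≤ 1 := by
  rcases le_total (a + b) 1 with hab | hab
  · calc ‖a • u + b • w - u‖ = ‖b • (w - u) + (1 - a - b) • (-u)‖ := by congr 1; module
      _ ≤ b * ‖w - u‖ + (1 - a - b) * ‖-u‖ := by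
          refine (norm_add_le _ _).trans (add_le_add ?_ ?_) <;>
            rw [norm_smul, Real.norm_of_nonneg (by linarith)]
      _ ≤ 1 := by rw [norm_neg]; nlinarith
  · calc ‖a • u + b • w - u‖ = ‖(a + b - 1) • w + (1 - a) • (w - u)‖ := by congr 1; module
      _ ≤ (a + b - 1) * ‖w‖ + (1 - a) * ‖w - u‖ := by
          refine (norm_add_le _ _).trans (add_le_add ?_ ?_) <;>
            rw [norm_smul, Real.norm_of_nonneg (by linarith)]
      _ ≤ 1 := by nlinarith

end

theorem stmt_18_general (E : Type*) [NormedAddCommGroup E] [NormedSpace ℝ E]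
    (v₁ v₂ : E) (hv₁ : ‖v₁‖ = 1) (hv₂ : ‖v₂‖ = 1) (hv₃ : ‖v₂ - v₁‖ = 1)
    (x : E) (hx : ‖x‖ = 1)
    (harc : ∃ lam mu : ℝ, 0 ≤ lam ∧ 0 ≤ mu ∧ x = lam • v₁ + mu • v₂) :
    ‖x - v₁‖ + ‖x + v₁‖ ≤ 3 := by
  obtain ⟨lam, mu, hlam, hmu, rfl⟩ := harc
  have hmu₁ : mu ≤ 1 := by
    simpa [hv₂, hx] using mul_norm_le_norm_smul_add_smul (b := mu) (hv₃.trans hv₂.symm).le hlam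
  have hlam₁ : lam ≤ 1 := by
    have h := mul_norm_le_norm_smul_add_smul (u := v₂) (w := v₁) (b := lam)
      (by rw [norm_sub_rev, hv₃, hv₁]) hmu
    rwa [add_comm, hx, hv₁, mul_one] at h
  have hsub : ‖lam • v₁ + mu • v₂ - v₁‖ ≤ 1 :=
    norm_smul_add_smul_sub_le_one hv₁.le hv₂.le hv₃.le hlam hlam₁ hmu hmu₁
  have hadd : ‖lam • v₁ + mu • v₂ + v₁‖ ≤ 2 := by
    linarith [norm_add_le (lam • v₁ + mu • v₂) v₁]
  linarith

theorem stmt_18 (E : Type*) [NormedAddCommGroup E] [NormedSpace ℝ E]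
    (hdim : Module.finrank ℝ E = 2)
    (v₁ v₂ : E) (hv₁ : ‖v₁‖ = 1) (hv₂ : ‖v₂‖ = 1) (hv₃ : ‖v₂ - v₁‖ = 1)
    (x : E) (hx : ‖x‖ = 1)
    (harc : ∃ lam mu : ℝ, 0 ≤ lam ∧ 0 ≤ mu ∧ x = lam • v₁ + mu • v₂) :
    ‖x - v₁‖ + ‖x + v₁‖ ≤ 3 :=
  stmt_18_general E v₁ v₂ hv₁ hv₂ hv₃ x hx harc
end
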